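/- arXiv:2010.03104 — 9 statements merged into one kernel-verified Lean document; each statement's English description precedes it below -/
import Mathlib

section
/- Let A be a finite set with τ elements and let d < τ be a positive integer. Suppose Dependent : 2^A × A → Bool is a relation such that for every subset A' ⊆ A with |A'| > d, there exists x ∈ A' with Dependent(A' \ {x}, x) = true. Then there exists an element x ∈ A and a collection of at least ⌊(τ-1)/d⌋/(d+1) pairwise disjoint subsets S₁, …, S_N of A (not containing x) such that Dependent(S_i, x) = true for all i. -/
/-!
Each `(d + 1)`-subset `B ⊆ A` yields a pair `(x, B \ {x})` with `x` dependent on the `d`-set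
`B \ {x}`, and `B` is recovered from the pair; counting these pairs, some `x` is dependent on at
least `C(τ - 1, d) / (d + 1)` of the `d`-subsets of `A \ {x}`.

Any family `F` of `d`-subsets of an `m`-set contains `⌊m / d⌋ |F| / C(m, d)` pairwise disjoint
members. Averaging over all `d`-subsets `D`, some `D` satisfies
`[D ∈ F] + (⌊m / d⌋ - 1) |F_D| / C(m - d, d) ≥ ⌊m / d⌋ |F| / C(m, d)`, where `F_D` consists of the
members disjoint from `D` (each member is disjoint from exactly `C(m - d, d)` of the `D`); keep `D`
if it lies in `F` and recurse on `F_D` inside the complement of `D`.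
-/

open Finset

section Packing

variable {α : Type*} [DecidableEq α] {M : Finset α} {d : ℕ} {F : Finset (Finset α)}

lemma card_filter_disjoint_powersetCard {E : Finset α} (hEM : E ⊆ M) (hE : #E = d) :
    #{D ∈ M.powersetCard d | Disjoint E D} = (#M - d).choose d := by
  have : {D ∈ M.powersetCard d | Disjoint E D} = (M \ E).powersetCard d := by
    ext D
    simp only [mem_filter, mem_powersetCard, subset_sdiff, disjoint_comm (a := E)]
    tauto
  rw [this, card_powersetCard, card_sdiff_of_subset hEM, hE]

lemma sum_card_filter_disjoint (hF : F ⊆ M.powersetCard d) :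
    ∑ D ∈ M.powersetCard d, #{E ∈ F | Disjoint E D} = #F * (#M - d).choose d := by
  simp_rw [card_filter]
  rw [sum_comm, ← smul_eq_mul, ← sum_const]
  refine sum_congr rfl fun E hE => ?_
  obtain ⟨hEM, hEcard⟩ := mem_powersetCard.1 (hF hE)
  rw [← card_filter, card_filter_disjoint_powersetCard hEM hEcard]

lemma exists_mem_powersetCard_mul_le (hF : F ⊆ M.powersetCard d) (hdM : d ≤ #M) (k : ℕ) :
    ∃ D ∈ M.powersetCard d, (k + 1) * #F * (#M - d).choose d ≤
      (#M).choose d * ((if D ∈ F then (#M - d).choose d else 0) +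
        k * #{E ∈ F | Disjoint E D}) := by
  apply exists_le_of_sum_le (powersetCard_nonempty.2 hdM)
  rw [sum_const, card_powersetCard, smul_eq_mul, ← mul_sum, sum_add_distrib, ← mul_sum,
    sum_card_filter_disjoint hF, sum_ite_mem, inter_eq_right.2 hF, sum_const, smul_eq_mul]
  exact le_of_eq (by ring)

theorem exists_pairwiseDisjoint_subset_mul_le (hF : F ⊆ M.powersetCard d) :
    ∃ 𝒮 ⊆ F, (𝒮 : Set (Finset α)).PairwiseDisjoint id ∧
      #M / d * #F ≤ #𝒮 * (#M).choose d := by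
  induction M using Finset.strongInduction generalizing F with
  | H M ih =>
  rcases F.eq_empty_or_nonempty with rfl | ⟨D₀, hD₀⟩
  · exact ⟨∅, empty_subset _, by simp, by simp⟩
  by_cases hk : #M / d ≤ 1
  · refine ⟨{D₀}, singleton_subset_iff.2 hD₀, by simp, ?_⟩
    calc #M / d * #F ≤ 1 * #(M.powersetCard d) := Nat.mul_le_mul hk (card_le_card hF)
      _ = #{D₀} * (#M).choose d := by simp
  have hd : 0 < d := Nat.pos_of_ne_zero (by rintro rfl; simp at hk)
  have h2d : 2 * d ≤ #M := (Nat.le_div_iff_mul_le hd).1 (by omega)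
  set c := (#M - d).choose d
  have hc : 0 < c := Nat.choose_pos (by omega)
  obtain ⟨D, hD, hDbound⟩ := exists_mem_powersetCard_mul_le hF (by omega) ((#M - d) / d)
  obtain ⟨hDM, hDcard⟩ := mem_powersetCard.1 hD
  have hDne : D.Nonempty := card_pos.1 (hDcard ▸ hd)
  have hF' : {E ∈ F | Disjoint E D} ⊆ (M \ D).powersetCard d := by
    intro E hE
    obtain ⟨hEF, hED⟩ := mem_filter.1 hE
    obtain ⟨hEM, hEcard⟩ := mem_powersetCard.1 (hF hEF)
    exact mem_powersetCard.2 ⟨subset_sdiff.2 ⟨hEM, hED⟩, hEcard⟩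
  obtain ⟨𝒮, h𝒮F', h𝒮disj, h𝒮card⟩ := ih (M \ D) (sdiff_ssubset hDM hDne) hF'
  rw [card_sdiff_of_subset hDM, hDcard] at h𝒮card
  have h𝒮F : 𝒮 ⊆ F := h𝒮F'.trans (filter_subset _ _)
  rw [Nat.div_eq_sub_div hd (by omega)]
  by_cases hDF : D ∈ F
  · have hD𝒮 : D ∉ 𝒮 := fun h => hDne.ne_empty (disjoint_self.1 (mem_filter.1 (h𝒮F' h)).2)
    refine ⟨insert D 𝒮, insert_subset hDF h𝒮F, ?_, ?_⟩
    · rw [coe_insert]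
      exact h𝒮disj.insert fun E hE _ => (mem_filter.1 (h𝒮F' hE)).2.symm
    · rw [if_pos hDF] at hDbound
      rw [card_insert_of_notMem hD𝒮]
      refine Nat.le_of_mul_le_mul_right ?_ hc
      calc _ ≤ _ := hDbound
        _ ≤ (#M).choose d * (c + #𝒮 * c) := by gcongr
        _ = _ := by ring
  · refine ⟨𝒮, h𝒮F, h𝒮disj, Nat.le_of_mul_le_mul_right ?_ hc⟩
    rw [if_neg hDF, zero_add] at hDbound
    calc _ ≤ _ := hDbound
      _ ≤ (#M).choose d * (#𝒮 * c) := by gcongr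
      _ = _ := by ring

end Packing

section Dependence

variable {α : Type*} [DecidableEq α] (P : Finset α → α → Prop) (A : Finset α) (d : ℕ)

theorem card_powersetCard_succ_le_sum_card
    (hP : ∀ B ⊆ A, #B = d + 1 → ∃ x ∈ B, P (B.erase x) x) [∀ S x, Decidable (P S x)] :
    #(A.powersetCard (d + 1)) ≤ ∑ x ∈ A, #{S ∈ (A.erase x).powersetCard d | P S x} := by
  rw [← card_sigma]
  refine card_le_card_of_surjOn (fun p => insert p.1 p.2) fun B hB => ?_
  obtain ⟨hBA, hBcard⟩ := mem_powersetCard.1 hB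
  obtain ⟨x, hxB, hx⟩ := hP B hBA hBcard
  refine ⟨⟨x, B.erase x⟩, ?_, insert_erase hxB⟩
  simp only [coe_sigma, Set.mem_sigma_iff, mem_coe, mem_filter, mem_powersetCard,
    card_erase_of_mem hxB, hBcard]
  exact ⟨hBA hxB, ⟨erase_subset_erase x hBA, rfl⟩, hx⟩

theorem exists_mem_dependent_family (hdA : d < #A)
    (hP : ∀ B ⊆ A, #B = d + 1 → ∃ x ∈ B, P (B.erase x) x) :
    ∃ x ∈ A, ∃ W ⊆ (A.erase x).powersetCard d, (∀ S ∈ W, P S x) ∧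
      (#A - 1).choose d ≤ (d + 1) * #W := by
  classical
  obtain ⟨n, hn⟩ : ∃ n, #A = n + 1 := Nat.exists_eq_add_one.2 (by omega)
  have hA : A.Nonempty := card_pos.1 (by omega)
  obtain ⟨x, hxA, hx⟩ := exists_le_of_sum_le hA (f := fun _ => (#A).choose (d + 1))
    (g := fun x => #A * #{S ∈ (A.erase x).powersetCard d | P S x}) (by
      rw [sum_const, smul_eq_mul, ← mul_sum, ← card_powersetCard]
      exact Nat.mul_le_mul_left _ (card_powersetCard_succ_le_sum_card P A d hP))
  refine ⟨x, hxA, _, filter_subset _ _, fun S hS => (mem_filter.1 hS).2, ?_⟩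
  simp only [hn, Nat.add_sub_cancel] at hx ⊢
  refine Nat.le_of_mul_le_mul_left ?_ n.add_one_pos
  calc (n + 1) * n.choose d = (n + 1).choose (d + 1) * (d + 1) := Nat.add_one_mul_choose_eq n d
    _ ≤ (n + 1) * #{S ∈ (A.erase x).powersetCard d | P S x} * (d + 1) := by gcongr
    _ = _ := by ring

theorem exists_mem_pairwiseDisjoint_dependent (hdA : d < #A)
    (hP : ∀ B ⊆ A, #B = d + 1 → ∃ x ∈ B, P (B.erase x) x) :
    ∃ x ∈ A, ∃ 𝒮 ⊆ (A.erase x).powersetCard d, (𝒮 : Set (Finset α)).PairwiseDisjoint id ∧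
      (∀ S ∈ 𝒮, P S x) ∧ (#A - 1) / d ≤ (d + 1) * #𝒮 := by
  obtain ⟨x, hxA, W, hW, hWP, hWcard⟩ := exists_mem_dependent_family P A d hdA hP
  obtain ⟨𝒮, h𝒮W, h𝒮disj, h𝒮card⟩ := exists_pairwiseDisjoint_subset_mul_le hW
  refine ⟨x, hxA, 𝒮, h𝒮W.trans hW, h𝒮disj, fun S hS => hWP S (h𝒮W hS), ?_⟩
  rw [card_erase_of_mem hxA] at h𝒮card
  refine Nat.le_of_mul_le_mul_right ?_ (Nat.choose_pos (d.le_sub_one_of_lt hdA))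
  calc (#A - 1) / d * (#A - 1).choose d ≤ (#A - 1) / d * ((d + 1) * #W) := by gcongr
    _ = (d + 1) * ((#A - 1) / d * #W) := by ring
    _ ≤ (d + 1) * (#𝒮 * (#A - 1).choose d) := by gcongr
    _ = _ := by ring

end Dependence

theorem stmt0_general {α : Type*} [DecidableEq α] (A : Finset α) (d : ℕ)
    (hdτ : d < A.card) (Dependent : Finset α → α → Bool)
    (hdep : ∀ A' ⊆ A, d < A'.card → ∃ x ∈ A', Dependent (A'.erase x) x = true) :
    ∃ x ∈ A, ∃ N : ℕ, (((A.card - 1) / d : ℕ) : ℝ) / ((d : ℝ) + 1) ≤ (N : ℝ) ∧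
      ∃ S : Fin N → Finset α, (∀ i, S i ⊆ A) ∧ (∀ i, x ∉ S i) ∧
        (∀ i j, i ≠ j → Disjoint (S i) (S j)) ∧ (∀ i, Dependent (S i) x = true) := by
  obtain ⟨x, hxA, 𝒮, h𝒮, h𝒮disj, h𝒮dep, h𝒮card⟩ :=
    exists_mem_pairwiseDisjoint_dependent (fun S x => Dependent S x = true) A d hdτ
      fun B hBA hB => hdep B hBA (by omega)
  have hmem (i : Fin #𝒮) : (𝒮.equivFin.symm i : Finset α) ∈ (A.erase x).powersetCard d :=
    h𝒮 (𝒮.equivFin.symm i).2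
  refine ⟨x, hxA, #𝒮, ?_, fun i => 𝒮.equivFin.symm i, fun i => ?_, fun i => ?_,
    fun i j hij => ?_, fun i => h𝒮dep _ (𝒮.equivFin.symm i).2⟩
  · rw [div_le_iff₀ (by positivity)]
    exact_mod_cast h𝒮card.trans_eq (mul_comm _ _)
  · exact (mem_powersetCard.1 (hmem i)).1.trans (erase_subset x A)
  · exact fun hx => notMem_erase x A ((mem_powersetCard.1 (hmem i)).1 hx)
  · exact h𝒮disj (𝒮.equivFin.symm i).2 (𝒮.equivFin.symm j).2
      (Subtype.coe_injective.ne (𝒮.equivFin.symm.injective.ne hij))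

/-- **Combinatorial dependence lemma.** Let `A` be a finite set with `τ` elements and
`d < τ` a positive integer. Suppose `Dependent : 2^A × A → Bool` is such that every
subset `A' ⊆ A` with `|A'| > d` contains an element `x` with
`Dependent (A' \ {x}, x) = true`. Then there is an element `x ∈ A` and at least
`⌊(τ-1)/d⌋/(d+1)` pairwise disjoint subsets of `A` (not containing `x`) on each of
which `x` is dependent. -/
theorem stmt0 {α : Type*} [DecidableEq α] (A : Finset α) (d : ℕ) (hd : 0 < d)
    (hdτ : d < A.card) (Dependent : Finset α → α → Bool)
    (hdep : ∀ A' ⊆ A, d < A'.card → ∃ x ∈ A', Dependent (A'.erase x) x = true) :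
    ∃ x ∈ A, ∃ N : ℕ, (((A.card - 1) / d : ℕ) : ℝ) / ((d : ℝ) + 1) ≤ (N : ℝ) ∧
      ∃ S : Fin N → Finset α, (∀ i, S i ⊆ A) ∧ (∀ i, x ∉ S i) ∧
        (∀ i j, i ≠ j → Disjoint (S i) (S j)) ∧ (∀ i, Dependent (S i) x = true) :=
  stmt0_general A d hdτ Dependent hdep
end

section
/- Let P and Q be probability measures on a measurable space (Ω, F) with P absolutely continuous with respect to Q. Then for any measurable set A ∈ F, P(A) + Q(Aᶜ) ≥ (1/2)·exp(−KL(P ‖ Q)). -/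
/-!
Write `a, b` for the `P`-masses and `s, t` for the `Q`-masses of `A` and `Aᶜ`. Jensen's inequality
for `log` on each of `A` and `Aᶜ`, applied to `dQ/dP` under `P`, gives the data-processing bound
`-KL(P ‖ Q) ≤ a log (s / a) + b log (t / b)`. Concavity of `log` once more bounds the right-hand
side by `2 log (√(as) + √(bt)) ≤ 2 log (√a + √t)`, and `(√a + √t)² ≤ 2 (a + t)`.
-/

open MeasureTheory Real Set

lemma mul_log_div_add_mul_log_div_le {a b s t : ℝ} (ha : 0 < a) (hb : 0 < b) (hs : 0 < s)
    (ht : 0 < t) (hab : a + b = 1) :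
    a * log (s / a) + b * log (t / b) ≤ 2 * log (√(a * s) + √(b * t)) := by
  have log_div_eq {u v : ℝ} (hu : 0 < u) (hv : 0 < v) :
      log (v / u) = 2 * log (√(u * v) / u) := by
    rw [← Nat.cast_ofNat, ← log_pow, div_pow, sq_sqrt (by positivity)]
    congr 1
    field_simp
  have mul_sqrt_mul_div {u v : ℝ} (hu : 0 < u) : u * (√(u * v) / u) = √(u * v) := by
    field_simp
  have hconcave := strictConcaveOn_log_Ioi.concaveOn.2
    (show 0 < √(a * s) / a by positivity) (show 0 < √(b * t) / b by positivity)
    ha.le hb.le hab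
  simp only [smul_eq_mul, mul_sqrt_mul_div ha, mul_sqrt_mul_div hb] at hconcave
  rw [log_div_eq ha hs, log_div_eq hb ht]
  linarith

/-- The two-point Bretagnolle–Huber inequality. -/
lemma exp_mul_log_div_add_mul_log_div_le {a b s t : ℝ} (ha : 0 ≤ a) (hb : 0 ≤ b) (ht : 0 ≤ t)
    (hab : a + b = 1) (hs : s ≤ 1) (has : 0 < a → 0 < s) (hbt : 0 < b → 0 < t) :
    exp (a * log (s / a) + b * log (t / b)) ≤ 2 * (a + t) := by
  rcases ha.eq_or_lt with rfl | ha
  · obtain rfl : b = 1 := by linarith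
    simp only [div_zero, log_zero, mul_zero, div_one, one_mul, zero_add,
      exp_log (hbt one_pos)]
    linarith
  rcases hb.eq_or_lt with rfl | hb
  · obtain rfl : a = 1 := by linarith
    simp only [div_one, one_mul, div_zero, log_zero, mul_zero, add_zero,
      exp_log (has one_pos)]
    linarith
  have has' : √(a * s) ≤ √a := sqrt_le_sqrt (by nlinarith [has ha])
  have hbt' : √(b * t) ≤ √t := sqrt_le_sqrt (by nlinarith)
  calc exp (a * log (s / a) + b * log (t / b))
      ≤ exp (2 * log (√(a * s) + √(b * t))) :=
        exp_le_exp.2 (mul_log_div_add_mul_log_div_le ha hb (has ha) (hbt hb) hab)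
    _ = (√(a * s) + √(b * t)) ^ 2 := by
        rw [mul_comm, exp_mul, exp_log (by positivity [has ha])]
        norm_cast
    _ ≤ (√a + √t) ^ 2 := by gcongr
    _ ≤ 2 * (a + t) := by nlinarith [sq_nonneg (√a - √t), sq_sqrt ha.le, sq_sqrt ht]

/-- Jensen's inequality for `log`. -/
lemma integral_log_le_mul_log_div {α : Type*} [MeasurableSpace α] {μ : Measure α}
    [IsFiniteMeasure μ] [NeZero μ] {g : α → ℝ} {S : ℝ} (hg : Integrable g μ)
    (hg_pos : ∀ᵐ x ∂μ, 0 < g x) (hlog : Integrable (fun x ↦ log (g x)) μ) (hS : 0 < S)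
    (hgS : ∫ x, g x ∂μ ≤ S) :
    ∫ x, log (g x) ∂μ ≤ μ.real univ * log (S / μ.real univ) := by
  set m := μ.real univ
  have hm : 0 < m := measureReal_univ_pos
  set c := S / m
  have hc : 0 < c := div_pos hS hm
  -- the tangent line of `log` at `c`
  have htangent : ∀ᵐ x ∂μ, log (g x) ≤ g x / c + (log c - 1) := by
    filter_upwards [hg_pos] with x hx
    have hle := log_le_sub_one_of_pos (div_pos hx hc)
    rw [log_div hx.ne' hc.ne'] at hle
    linarith
  calc ∫ x, log (g x) ∂μ
      ≤ ∫ x, (g x / c + (log c - 1)) ∂μ :=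
        integral_mono_ae hlog ((hg.div_const c).add (integrable_const _)) htangent
    _ = (∫ x, g x ∂μ) / c + m * (log c - 1) := by
        rw [integral_add (hg.div_const c) (integrable_const _), integral_div, integral_const,
          smul_eq_mul]
    _ ≤ S / c + m * (log c - 1) := by gcongr
    _ = m * log c := by
        simp only [c]
        field_simp
        ring

lemma setIntegral_llr_le_mul_log_div {α : Type*} [MeasurableSpace α] {μ ν : Measure α}
    [IsFiniteMeasure μ] [IsFiniteMeasure ν] (hμν : μ ≪ ν) (hint : Integrable (llr ν μ) μ)
    (B : Set α) :
    ∫ x in B, llr ν μ x ∂μ ≤ μ.real B * log (ν.real B / μ.real B) := by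
  rcases eq_or_ne (μ B) 0 with hB | hB
  · simp [Measure.restrict_eq_zero.2 hB, measureReal_def, hB]
  have : NeZero (μ.restrict B) := ⟨Measure.restrict_eq_zero.not.2 hB⟩
  have hνB : 0 < ν.real B :=
    ENNReal.toReal_pos (fun h ↦ hB (hμν h)) (measure_ne_top ν B)
  have hpos : ∀ᵐ x ∂μ, 0 < (ν.rnDeriv μ x).toReal := by
    filter_upwards [Measure.rnDeriv_pos' hμν, Measure.rnDeriv_lt_top ν μ] with x h0 htop
    exact ENNReal.toReal_pos h0.ne' htop.ne
  simpa [llr, measureReal_restrict_apply_univ] using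
    integral_log_le_mul_log_div Measure.integrable_toReal_rnDeriv.restrict
      (ae_restrict_of_ae hpos) hint.restrict hνB
      (Measure.setIntegral_toReal_rnDeriv_le (measure_ne_top ν B))

/-- **High-probability Pinsker inequality.** For probability measures `P ≪ Q` with
integrable log-density (i.e. finite KL divergence `KL(P ‖ Q) = ∫ log (dP/dQ) dP`),
for any measurable set `A`, `P(A) + Q(Aᶜ) ≥ (1/2) exp(-KL(P ‖ Q))`. -/
theorem stmt3 {Ω : Type*} [MeasurableSpace Ω] (P Q : Measure Ω)
    [IsProbabilityMeasure P] [IsProbabilityMeasure Q] (hPQ : P ≪ Q)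
    (hint : Integrable (fun ω => Real.log (P.rnDeriv Q ω).toReal) P)
    (A : Set Ω) (hA : MeasurableSet A) :
    (1 / 2) * Real.exp (-(∫ ω, Real.log (P.rnDeriv Q ω).toReal ∂P)) ≤
      (P A).toReal + (Q Aᶜ).toReal := by
  have hllr : Integrable (llr Q P) P := hint.neg.congr (neg_llr hPQ)
  have hKL : -(∫ ω, log (P.rnDeriv Q ω).toReal ∂P) =
      ∫ ω in A, llr Q P ω ∂P + ∫ ω in Aᶜ, llr Q P ω ∂P := by
    rw [integral_add_compl hA hllr, ← integral_neg]
    exact integral_congr_ae (neg_llr hPQ)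
  have hpos (B : Set Ω) (hB : 0 < P.real B) : 0 < Q.real B :=
    ENNReal.toReal_pos (fun h ↦ hB.ne' (by simp [measureReal_def, hPQ h]))
      (measure_ne_top Q B)
  have hexp := exp_mul_log_div_add_mul_log_div_le measureReal_nonneg measureReal_nonneg
    measureReal_nonneg (probReal_add_probReal_compl hA) measureReal_le_one (hpos A) (hpos Aᶜ)
  have hdpi := add_le_add (setIntegral_llr_le_mul_log_div hPQ hllr A)
    (setIntegral_llr_le_mul_log_div hPQ hllr Aᶜ)
  rw [← hKL] at hdpi
  have hbound := (exp_le_exp.2 hdpi).trans hexp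
  simp only [measureReal_def] at hbound
  linarith
end

section
/- For every d ∈ ℕ, there exists a value function class F over context space X = {1,…,d} and actions A = {0,1}, together with f* ∈ F, such that the value function star number of F satisfies sup_Δ s^val(F, f*, Δ) ≤ 5 while the (strong) policy star number of the induced policy class Π = {π_f : f ∈ F} with respect to π* = π_{f*} is at least d. -/
/-!
Take `f* = 0` and, for each context `i`, the function `fᵢ` (`spike i`) with
`(fᵢ(i, false), fᵢ(i, true)) = (1/2, 1/4)` and `(1/4, 1/2)` at every other context. The greedy
policy of `fᵢ` deviates from `π* ≡ true` exactly at `i`, so the contexts `1, …, d` form a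
policy-star witness. On the value side, every entry of `fᵢ - f*` lies in `[1/4, 1/2]`: a point of
a witness at scale `Δ` forces `Δ < 1/2`, while each of the other `m - 1` points contributes at
least `1/16` to a sum bounded by `Δ² < 1/4`, so `m ≤ 4`.
-/

/-- A sequence `z` of `m` context-action pairs witnesses the value function star
number of `(F, f*)` at scale `Δ`: for each `i` there is `f⁽ⁱ⁾ ∈ F` with
`|f⁽ⁱ⁾(z_i) − f*(z_i)| > Δ` and `∑_{j ≠ i} (f⁽ⁱ⁾(z_j) − f*(z_j))² ≤ Δ²`. -/
def ValStarWitness {X A : Type*} (F : Set (X → A → ℝ)) (fstar : X → A → ℝ)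
    (Δ : ℝ) (m : ℕ) (z : Fin m → X × A) : Prop :=
  ∀ i : Fin m, ∃ f ∈ F,
    Δ < |f (z i).1 (z i).2 - fstar (z i).1 (z i).2| ∧
    ∑ j ∈ Finset.univ.erase i, (f (z j).1 (z j).2 - fstar (z j).1 (z j).2) ^ 2 ≤ Δ ^ 2

/-- A sequence of `m` context-action pairs witnesses the (strong) policy star
number of `(Π, π*)`: for each `i` there is `π⁽ⁱ⁾ ∈ Π` with
`π⁽ⁱ⁾(x⁽ⁱ⁾) = a⁽ⁱ⁾ ≠ π*(x⁽ⁱ⁾)` and `π⁽ⁱ⁾(x⁽ʲ⁾) = π*(x⁽ʲ⁾)` for all `j ≠ i` with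
`x⁽ʲ⁾ ≠ x⁽ⁱ⁾`. -/
def PolStarWitness {X A : Type*} (Pi : Set (X → A)) (pistar : X → A)
    (m : ℕ) (z : Fin m → X × A) : Prop :=
  ∀ i : Fin m, ∃ π ∈ Pi,
    π (z i).1 = (z i).2 ∧ (z i).2 ≠ pistar (z i).1 ∧
    ∀ j : Fin m, j ≠ i → (z j).1 ≠ (z i).1 → π (z j).1 = pistar (z j).1

theorem ValStarWitness.pred_mul_sq_lt {X A : Type*} {F : Set (X → A → ℝ)} {fstar : X → A → ℝ}
    {c C Δ : ℝ} {m : ℕ} {z : Fin m → X × A} (hc : 0 ≤ c)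
    (hF : ∀ f ∈ F, f ≠ fstar → ∀ x a, c ≤ |f x a - fstar x a| ∧ |f x a - fstar x a| ≤ C)
    (hΔ : 0 ≤ Δ) (hw : ValStarWitness F fstar Δ m z) (hm : 0 < m) :
    ((m - 1 : ℕ) : ℝ) * c ^ 2 < C ^ 2 := by
  obtain ⟨f, hfF, hfar, hnear⟩ := hw ⟨0, hm⟩
  have hf : f ≠ fstar := by
    rintro rfl
    simp only [sub_self, abs_zero] at hfar
    linarith
  have hΔC : Δ < C := hfar.trans_le (hF f hfF hf _ _).2
  have hsum : ((m - 1 : ℕ) : ℝ) * c ^ 2 ≤ Δ ^ 2 := by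
    calc ((m - 1 : ℕ) : ℝ) * c ^ 2
        = ∑ _j ∈ Finset.univ.erase (⟨0, hm⟩ : Fin m), c ^ 2 := by
          rw [Finset.sum_const, Finset.card_erase_of_mem (Finset.mem_univ _), Finset.card_univ,
            Fintype.card_fin, nsmul_eq_mul]
      _ ≤ ∑ j ∈ Finset.univ.erase (⟨0, hm⟩ : Fin m),
            (f (z j).1 (z j).2 - fstar (z j).1 (z j).2) ^ 2 := by
          refine Finset.sum_le_sum fun j _ => ?_
          exact (pow_le_pow_left₀ hc (hF f hfF hf _ _).1 2).trans_eq (sq_abs _)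
      _ ≤ Δ ^ 2 := hnear
  exact hsum.trans_lt (pow_lt_pow_left₀ hΔC hΔ two_ne_zero)

noncomputable def greedy {X : Type*} (f : X → Bool → ℝ) (x : X) : Bool :=
  decide (f x false ≤ f x true)

theorem le_greedy {X : Type*} (f : X → Bool → ℝ) (x : X) (a : Bool) :
    f x a ≤ f x (greedy f x) := by
  unfold greedy
  by_cases h : f x false ≤ f x true <;> cases a <;> simp [h, le_of_not_ge]

theorem greedy_zero {X : Type*} (x : X) : greedy (fun _ _ => (0 : ℝ)) x = true := by
  simp [greedy]

noncomputable def spike {X : Type*} [DecidableEq X] (i : X) (x : X) (a : Bool) : ℝ :=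
  if x = i then (if a then 1 / 4 else 1 / 2) else (if a then 1 / 2 else 1 / 4)

theorem spike_eq_or {X : Type*} [DecidableEq X] (i x : X) (a : Bool) :
    spike i x a = 1 / 4 ∨ spike i x a = 1 / 2 := by
  unfold spike
  split_ifs <;> simp

theorem greedy_spike {X : Type*} [DecidableEq X] (i x : X) :
    greedy (spike i) x = decide (x ≠ i) := by
  by_cases h : x = i <;> norm_num [greedy, spike, h]

theorem PolStarWitness.mono {X A : Type*} {Pi Pi' : Set (X → A)} {pistar : X → A} {m : ℕ}
    {z : Fin m → X × A} (hw : PolStarWitness Pi pistar m z) (h : Pi ⊆ Pi') :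
    PolStarWitness Pi' pistar m z := fun i =>
  let ⟨π, hπ, hπz⟩ := hw i
  ⟨π, h hπ, hπz⟩

theorem polStarWitness_greedy_spike (d : ℕ) :
    PolStarWitness (Set.range fun i : Fin d => greedy (spike i)) (fun _ => true) d
      (fun i => (i, false)) := by
  intro i
  refine ⟨_, ⟨i, rfl⟩, by simp [greedy_spike], Bool.false_ne_true, fun j _ hj => ?_⟩
  simp [greedy_spike, hj]

/-- **Separation between value function star number and policy star number.**
For every `d` there is a class `F` of value functions on contexts `{1,…,d}` with two
actions, and `f* ∈ F` (with induced argmax policies `Pol f` and `π* = Pol f*`), such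
that every value-star witness at any scale `Δ > 0` has length at most `5`, while the
induced policy class admits a policy-star witness of length `d`. -/
theorem stmt7 (d : ℕ) :
    ∃ (F : Set (Fin d → Bool → ℝ)) (fstar : Fin d → Bool → ℝ)
      (Pol : (Fin d → Bool → ℝ) → Fin d → Bool),
      fstar ∈ F ∧
      (∀ f ∈ F, ∀ x a, f x a ≤ f x (Pol f x)) ∧
      (∀ Δ : ℝ, 0 < Δ → ∀ m (z : Fin m → Fin d × Bool),
        ValStarWitness F fstar Δ m z → m ≤ 5) ∧
      (∃ z : Fin d → Fin d × Bool,
        PolStarWitness ((fun f => Pol f) '' F) (Pol fstar) d z) := by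
  set F : Set (Fin d → Bool → ℝ) := insert (fun _ _ => 0) (Set.range spike)
  have hdev : ∀ f ∈ F, f ≠ (fun _ _ => 0) →
      ∀ x a, 1 / 4 ≤ |f x a - 0| ∧ |f x a - 0| ≤ (1 / 2 : ℝ) := by
    rintro f (rfl | ⟨i, rfl⟩) hf x a
    · exact absurd rfl hf
    · rcases spike_eq_or i x a with h | h <;> norm_num [h, abs_of_pos]
  refine ⟨F, fun _ _ => 0, greedy, Set.mem_insert _ _, fun f _ => le_greedy f,
    fun Δ hΔ m z hw => ?_, fun i => (i, false), ?_⟩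
  · rcases Nat.eq_zero_or_pos m with rfl | hm
    · omega
    have hbound := hw.pred_mul_sq_lt (by norm_num) hdev hΔ.le hm
    have hm4 : m - 1 < 4 := by exact_mod_cast (by linarith : ((m - 1 : ℕ) : ℝ) < 4)
    omega
  · rw [funext greedy_zero]
    refine (polStarWitness_greedy_spike d).mono ?_
    rintro _ ⟨i, rfl⟩
    exact ⟨spike i, Or.inr ⟨i, rfl⟩, rfl⟩
end

section
/- For every d ∈ ℕ and Δ ∈ (0,1), there exists a function class F over X = {1,…,d} and A = {0,1}, and f* ∈ F, such that the value function star number satisfies sup_{Δ'} s^val(F, f*, Δ') ≤ 2 while the value function eluder dimension satisfies e^val(F, f*, Δ/2) ≥ d. -/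
/-- A sequence `z` of `m` context-action pairs witnesses the value function eluder
dimension of `(F, f*)` at scale `Δ` (constraint sum over `j < i`). -/
def ValEluderWitness {X A : Type*} (F : Set (X → A → ℝ)) (fstar : X → A → ℝ)
    (Δ : ℝ) (m : ℕ) (z : Fin m → X × A) : Prop :=
  ∀ i : Fin m, ∃ f ∈ F,
    Δ < |f (z i).1 (z i).2 - fstar (z i).1 (z i).2| ∧
    ∑ j ∈ Finset.univ.filter (fun j : Fin m => j < i),
      (f (z j).1 (z j).2 - fstar (z j).1 (z j).2) ^ 2 ≤ Δ ^ 2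

/-!
Take for `F` the threshold functions `x ↦ 1[k ≤ x]` together with `f* = 0`. A star witness
point must strictly beat every other point of the sequence for a single monotone function,
so it is the unique maximum of the sequence and there is at most one of it. Feeding the
contexts in increasing order, the threshold at the current context vanishes on all earlier
ones, which gives an eluder witness of full length `d` at every scale below `1`.
-/

def thresholdClass (X A : Type*) [LinearOrder X] : Set (X → A → ℝ) :=
  insert 0 (Set.range fun (k : X) (x : X) (_ : A) => if k ≤ x then 1 else 0)

theorem ValStarWitness.length_le_one {X A : Type*} [LinearOrder X] {F : Set (X → A → ℝ)}
    {fstar : X → A → ℝ}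
    (hmono : ∀ f ∈ F, ∀ (x y : X) (a b : A), x ≤ y →
      |f x a - fstar x a| ≤ |f y b - fstar y b|)
    {Δ : ℝ} (hΔ : 0 ≤ Δ) {m : ℕ} {z : Fin m → X × A} (hz : ValStarWitness F fstar Δ m z) :
    m ≤ 1 := by
  have lt_of_ne : ∀ i j, j ≠ i → (z j).1 < (z i).1 := by
    intro i j hji
    obtain ⟨f, hf, hfi, hsum⟩ := hz i
    have hfj : (f (z j).1 (z j).2 - fstar (z j).1 (z j).2) ^ 2 ≤ Δ ^ 2 :=
      (Finset.single_le_sum (f := fun t => (f (z t).1 (z t).2 - fstar (z t).1 (z t).2) ^ 2)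
        (fun _ _ => sq_nonneg _)
        (Finset.mem_erase.2 ⟨hji, Finset.mem_univ j⟩)).trans hsum
    rw [← sq_abs] at hfj
    have hfj' := (sq_le_sq₀ (abs_nonneg _) hΔ).1 hfj
    exact lt_of_not_ge fun hij => (hfi.trans_le (hmono f hf _ _ _ _ hij)).not_ge hfj'
  by_contra! hm
  exact (lt_of_ne ⟨0, by omega⟩ ⟨1, hm⟩ (by simp)).asymm
    (lt_of_ne ⟨1, hm⟩ ⟨0, by omega⟩ (by simp))

theorem thresholdClass_abs_monotone {X A : Type*} [LinearOrder X] :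
    ∀ f ∈ thresholdClass X A, ∀ (x y : X) (a b : A), x ≤ y →
      |f x a - (0 : X → A → ℝ) x a| ≤ |f y b - (0 : X → A → ℝ) y b| := by
  rintro f (rfl | ⟨k, rfl⟩) x y a b hxy
  · simp
  · by_cases hkx : k ≤ x
    · simp [hkx, hkx.trans hxy]
    · by_cases hky : k ≤ y <;> simp [hkx, hky]

theorem valEluderWitness_thresholdClass {A : Type*} (d : ℕ) (a : A) {Δ : ℝ} (hΔ : Δ < 1) :
    ValEluderWitness (thresholdClass (Fin d) A) 0 Δ d fun i => (i, a) := by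
  intro i
  refine ⟨fun x _ => if i ≤ x then 1 else 0, Set.mem_insert_of_mem _ ⟨i, rfl⟩, ?_, ?_⟩
  · simpa using hΔ
  · rw [Finset.sum_eq_zero fun j hj => by simp [not_le.2 (Finset.mem_filter.1 hj).2]]
    positivity

/-- **Separation between star number and eluder dimension.** For every `d ∈ ℕ` and
`Δ ∈ (0,1)` there is a class `F` on contexts `{1,…,d}` with two actions and
`f* ∈ F` such that every value-star witness (at any positive scale) has length at
most `2`, while there is an eluder witness of length `d` at some scale `Δ' > Δ/2`
(so the eluder dimension at scale `Δ/2` is at least `d`). -/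
theorem stmt8 (d : ℕ) (Δ : ℝ) (hΔ : Δ ∈ Set.Ioo (0 : ℝ) 1) :
    ∃ (F : Set (Fin d → Bool → ℝ)) (fstar : Fin d → Bool → ℝ),
      fstar ∈ F ∧
      (∀ Δ' : ℝ, 0 < Δ' → ∀ m (z : Fin m → Fin d × Bool),
        ValStarWitness F fstar Δ' m z → m ≤ 2) ∧
      (∃ Δ' : ℝ, Δ / 2 < Δ' ∧ ∃ z : Fin d → Fin d × Bool,
        ValEluderWitness F fstar Δ' d z) := by
  refine ⟨thresholdClass (Fin d) Bool, 0, Set.mem_insert _ _, ?_, ?_⟩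
  · intro Δ' hΔ' m z hz
    have := hz.length_le_one thresholdClass_abs_monotone hΔ'.le
    omega
  · exact ⟨Δ, by linarith [hΔ.1], _, valEluderWitness_thresholdClass d true hΔ.2⟩
end

section
/- Let Z be a set, G a class of functions Z → [0,1], and fix ζ > 0, ε > 0. For any finite sequence S = (z₁,…,z_n) of points of Z, let G_S(ε) = { g ∈ G : ∑_{j=1}^n g(z_j)² ≤ ε² } and w(z) = sup_{g ∈ G_S(ε)} g(z). Let d = š(G, ζ) denote the largest m such that there exist points z⁽¹⁾,…,z⁽ᵐ⁾ and functions g⁽¹⁾,…,g⁽ᵐ⁾ ∈ G with g⁽ⁱ⁾(z⁽ⁱ⁾) > ζ and ∑_{j≠i} g⁽ⁱ⁾(z⁽ʲ⁾)² ≤ ζ² for all i. Then ∑_{j=1}^n 1{ w(z_j) > ζ } ≤ (ε²/ζ²)·d² + (ε²/ζ²)·d + d + 1. -/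
/-!
For each index `j` where the width exceeds `ζ`, pick a witness `g_j ∈ G` with
`∑_k g_j(z_k)² ≤ ε²` and `g_j(z_j) > ζ`, and give the ordered pair `(i, j)` the weight
`g_i(z_j)²`, so that every row has weight at most `ε²`. Among the `N` such indices, any
`d + 1` of them with total internal weight at most `ζ²` would form a star set of size
`d + 1 > d`. Averaging the internal weight over all `(d+1)`-subsets (a fixed pair lies in a
fraction `d(d+1)/(N(N-1))` of them) produces one of weight at most `d(d+1)ε²/(N-1)`, which
is below `ζ²` as soon as `N - 1 > d(d+1)ε²/ζ²`.
-/

open scoped Classical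

open Finset

theorem Nat.add_two_mul_add_one_mul_choose (n k : ℕ) :
    (n + 2) * (n + 1) * n.choose k = (n + 2).choose (k + 2) * ((k + 2) * (k + 1)) := by
  rw [mul_assoc, Nat.add_one_mul_choose_eq, ← mul_assoc, Nat.add_one_mul_choose_eq, mul_assoc]

namespace Finset

variable {α : Type*} [DecidableEq α]

theorem card_powersetCard_filter_superset {s u : Finset α} {k : ℕ} (hus : u ⊆ s)
    (huk : #u ≤ k) : #{T ∈ s.powersetCard k | u ⊆ T} = (#s - #u).choose (k - #u) := by
  rw [← card_sdiff_of_subset hus, ← card_powersetCard]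
  refine card_nbij' (· \ u) (· ∪ u) ?_ ?_ ?_ ?_
  · intro T hT
    simp only [mem_coe, mem_filter, mem_powersetCard] at hT ⊢
    obtain ⟨⟨hTs, hTk⟩, huT⟩ := hT
    exact ⟨sdiff_subset_sdiff hTs le_rfl, by rw [card_sdiff_of_subset huT, hTk]⟩
  · intro V hV
    simp only [mem_coe, mem_filter, mem_powersetCard] at hV ⊢
    obtain ⟨hVs, hVk⟩ := hV
    refine ⟨⟨union_subset (hVs.trans sdiff_subset) hus, ?_⟩, subset_union_right⟩
    rw [card_union_of_disjoint (disjoint_of_subset_left hVs sdiff_disjoint), hVk]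
    omega
  · intro T hT
    simp only [mem_coe, mem_filter] at hT
    exact sdiff_union_of_subset hT.2
  · intro V hV
    simp only [mem_coe, mem_powersetCard] at hV
    exact union_sdiff_cancel_right (disjoint_of_subset_left hV.1 sdiff_disjoint)

theorem sum_powersetCard_sum_offDiag {M : Type*} [AddCommMonoid M] (s : Finset α) (k : ℕ)
    (f : α × α → M) :
    ∑ T ∈ s.powersetCard (k + 2), ∑ p ∈ T.offDiag, f p
      = (#s - 2).choose k • ∑ p ∈ s.offDiag, f p := by
  rw [sum_comm' (t' := s.offDiag) (s' := fun p => {T ∈ s.powersetCard (k + 2) | {p.1, p.2} ⊆ T}),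
    smul_sum]
  · refine sum_congr rfl fun p hp => ?_
    obtain ⟨h1, h2, hne⟩ := mem_offDiag.mp hp
    have hcard : #({p.1, p.2} : Finset α) = 2 := card_pair hne
    rw [sum_const, card_powersetCard_filter_superset (by simp [insert_subset_iff, h1, h2])
      (by omega), hcard, Nat.add_sub_cancel]
  · intro T p
    simp only [mem_powersetCard, mem_offDiag, mem_filter, insert_subset_iff,
      singleton_subset_iff]
    constructor
    · rintro ⟨⟨hTs, hTk⟩, h1, h2, hne⟩
      exact ⟨⟨⟨hTs, hTk⟩, h1, h2⟩, hTs h1, hTs h2, hne⟩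
    · rintro ⟨⟨⟨hTs, hTk⟩, h1, h2⟩, -, -, hne⟩
      exact ⟨⟨hTs, hTk⟩, h1, h2, hne⟩

theorem sum_offDiag_eq_sum_sum_erase {M : Type*} [AddCommMonoid M] (s : Finset α)
    (f : α × α → M) : ∑ p ∈ s.offDiag, f p = ∑ i ∈ s, ∑ j ∈ s.erase i, f (i, j) :=
  sum_finset_product _ _ _ fun p => by simp [mem_offDiag, ne_comm, and_comm, and_left_comm]

theorem sum_erase_le_sum_offDiag {M : Type*} [AddCommMonoid M] [PartialOrder M]
    [IsOrderedAddMonoid M] {s : Finset α} {i : α} (hi : i ∈ s) {f : α × α → M}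
    (hf : ∀ p ∈ s.offDiag, 0 ≤ f p) : ∑ j ∈ s.erase i, f (i, j) ≤ ∑ p ∈ s.offDiag, f p := by
  rw [sum_offDiag_eq_sum_sum_erase]
  refine single_le_sum (f := fun a => ∑ j ∈ s.erase a, f (a, j))
    (fun a ha => sum_nonneg fun j hj => hf _ ?_) hi
  exact mem_offDiag.mpr ⟨ha, mem_of_mem_erase hj, (ne_of_mem_erase hj).symm⟩

theorem exists_mem_powersetCard_mul_sum_offDiag_le (s : Finset α) {k : ℕ} (hk : k ≤ #s)
    (f : α × α → ℝ) :
    ∃ T ∈ s.powersetCard k,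
      (#s : ℝ) * (#s - 1) * ∑ p ∈ T.offDiag, f p ≤ k * (k - 1) * ∑ p ∈ s.offDiag, f p := by
  obtain ⟨T, hT⟩ := powersetCard_nonempty.mpr hk
  obtain _ | _ | k := k
  · obtain rfl := card_eq_zero.mp (mem_powersetCard.mp hT).2
    exact ⟨∅, hT, by simp⟩
  · obtain ⟨a, rfl⟩ := card_eq_one.mp (mem_powersetCard.mp hT).2
    exact ⟨{a}, hT, by simp⟩
  obtain ⟨n, hn⟩ : ∃ n, #s = n + 2 := ⟨#s - 2, by omega⟩
  refine exists_le_of_sum_le ⟨T, hT⟩ (le_of_eq ?_)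
  rw [← mul_sum, sum_powersetCard_sum_offDiag, sum_const, card_powersetCard, nsmul_eq_mul,
    nsmul_eq_mul, ← mul_assoc, ← mul_assoc]
  congr 1
  have h := congrArg (Nat.cast : ℕ → ℝ) (Nat.add_two_mul_add_one_mul_choose n k)
  rw [hn, Nat.add_sub_cancel]
  push_cast at h ⊢
  linear_combination h

theorem exists_mem_powersetCard_mul_sum_offDiag_le_of_sum_erase_le (s : Finset α) {k : ℕ}
    (hk : k ≤ #s) {f : α × α → ℝ} {E : ℝ} (hE : ∀ i ∈ s, ∑ j ∈ s.erase i, f (i, j) ≤ E) :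
    ∃ T ∈ s.powersetCard k, (#s - 1 : ℝ) * ∑ p ∈ T.offDiag, f p ≤ k * (k - 1) * E := by
  obtain ⟨T, hT, hTs⟩ := s.exists_mem_powersetCard_mul_sum_offDiag_le hk f
  rcases (#s).eq_zero_or_pos with hs | hs
  · obtain rfl : k = 0 := by omega
    obtain rfl := card_eq_zero.mp (mem_powersetCard.mp hT).2
    exact ⟨∅, hT, by simp⟩
  have hk_nonneg : (0 : ℝ) ≤ k * (k - 1) := by
    rcases k with _ | k
    · simp
    · push_cast
      nlinarith
  have hsum : ∑ p ∈ s.offDiag, f p ≤ #s * E := by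
    simpa [sum_offDiag_eq_sum_sum_erase] using sum_le_card_nsmul s _ E hE
  refine ⟨T, hT, le_of_mul_le_mul_left ?_ (by exact_mod_cast hs : (0 : ℝ) < #s)⟩
  calc (#s : ℝ) * ((#s - 1) * ∑ p ∈ T.offDiag, f p)
      = #s * (#s - 1) * ∑ p ∈ T.offDiag, f p := by ring
    _ ≤ k * (k - 1) * (#s * E) := hTs.trans (by gcongr)
    _ = #s * (k * (k - 1) * E) := by ring

end Finset

section StarSet

variable {Z ι : Type*}

def IsStarSet (G : Set (Z → ℝ)) (ζ : ℝ) [DecidableEq ι] (s : Finset ι) (w : ι → Z) : Prop :=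
  ∀ i ∈ s, ∃ g ∈ G, ζ < g (w i) ∧ ∑ j ∈ s.erase i, (g (w j)) ^ 2 ≤ ζ ^ 2

theorem IsStarSet.card_le [DecidableEq ι] {G : Set (Z → ℝ)} {ζ : ℝ} {d : ℕ}
    (hd : ∀ (m : ℕ) (w : Fin m → Z),
      (∀ i : Fin m, ∃ g ∈ G, ζ < g (w i) ∧
        ∑ j ∈ Finset.univ.erase i, (g (w j)) ^ 2 ≤ ζ ^ 2) → m ≤ d)
    {s : Finset ι} {w : ι → Z} (hs : IsStarSet G ζ s w) : #s ≤ d := by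
  let e : Fin #s ≃ s := s.equivFin.symm
  refine hd _ (fun i => w (e i)) fun i => ?_
  obtain ⟨g, hgG, hgi, hgs⟩ := hs (e i) (e i).2
  refine ⟨g, hgG, hgi, ?_⟩
  rwa [sum_erase_eq_sub (mem_univ i), Equiv.sum_comp e (fun x => g (w x) ^ 2),
    sum_coe_sort s (fun x => g (w x) ^ 2), ← sum_erase_eq_sub (e i).2]

end StarSet

theorem stmt10_general {Z : Type*} (G : Set (Z → ℝ))
    (ζ ε : ℝ) (hζ : 0 < ζ)
    (d : ℕ)
    (hd : ∀ (m : ℕ) (w : Fin m → Z),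
      (∀ i : Fin m, ∃ g ∈ G, ζ < g (w i) ∧
        ∑ j ∈ Finset.univ.erase i, (g (w j)) ^ 2 ≤ ζ ^ 2) → m ≤ d)
    (n : ℕ) (z : Fin n → Z) :
    ((Finset.univ.filter fun j : Fin n =>
        ∃ g ∈ G, (∑ k, (g (z k)) ^ 2 ≤ ε ^ 2) ∧ ζ < g (z j)).card : ℝ)
      ≤ ε ^ 2 / ζ ^ 2 * d ^ 2 + ε ^ 2 / ζ ^ 2 * d + d + 1 := by
  set B := Finset.univ.filter fun j : Fin n =>
    ∃ g ∈ G, (∑ k, (g (z k)) ^ 2 ≤ ε ^ 2) ∧ ζ < g (z j)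
  choose! g hgG hgsum hgj using fun j (hj : j ∈ B) => (mem_filter.mp hj).2
  by_contra! hlarge
  rw [show ε ^ 2 / ζ ^ 2 * d ^ 2 + ε ^ 2 / ζ ^ 2 * d = d * (d + 1) * ε ^ 2 / ζ ^ 2 by ring]
    at hlarge
  have hratio_nonneg : (0 : ℝ) ≤ d * (d + 1) * ε ^ 2 / ζ ^ 2 := by positivity
  have hdB : d + 1 ≤ #B := by exact_mod_cast (show (d : ℝ) + 1 ≤ #B by linarith)
  obtain ⟨T, hT, hT_le⟩ := B.exists_mem_powersetCard_mul_sum_offDiag_le_of_sum_erase_le hdB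
    (f := fun p => g p.1 (z p.2) ^ 2) fun i hi =>
      (sum_le_sum_of_subset_of_nonneg (subset_univ _) fun _ _ _ => sq_nonneg _).trans (hgsum i hi)
  obtain ⟨hTB, hTcard⟩ := mem_powersetCard.mp hT
  have hT_lt : ∑ p ∈ T.offDiag, g p.1 (z p.2) ^ 2 < ζ ^ 2 := by
    rw [show ((d + 1 : ℕ) : ℝ) * ((d + 1 : ℕ) - 1) = d * (d + 1) by push_cast; ring] at hT_le
    have hlt : d * (d + 1) * ε ^ 2 < (#B - 1 : ℝ) * ζ ^ 2 := by
      rw [← div_lt_iff₀ (by positivity)]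
      linarith
    exact lt_of_mul_lt_mul_left (hT_le.trans_lt hlt) (by linarith)
  have hT_star : IsStarSet G ζ T z := fun i hi =>
    ⟨g i, hgG i (hTB hi), hgj i (hTB hi),
      (sum_erase_le_sum_offDiag hi fun p _ => sq_nonneg _).trans hT_lt.le⟩
  have := hT_star.card_le hd
  omega

/-- **Star number controls empirical disagreement (Lemma `lem:star`).** Let `G` be a
class of `[0,1]`-valued functions on `Z`, `ζ, ε > 0`, and let `d` bound the
fixed-scale star number `š(G, ζ)` (i.e. every sequence `w⁽¹⁾,…,w⁽ᵐ⁾` admitting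
functions `g⁽ⁱ⁾ ∈ G` with `g⁽ⁱ⁾(w_i) > ζ` and `∑_{j ≠ i} g⁽ⁱ⁾(w_j)² ≤ ζ²` has
`m ≤ d`). Then for any sequence `z₁,…,z_n`, the number of indices `j` at which the
width `w(z_j) = sup_{g ∈ G_S(ε)} g(z_j)` exceeds `ζ` — equivalently, at which some
`g ∈ G` with `∑_k g(z_k)² ≤ ε²` has `g(z_j) > ζ` — is at most
`(ε²/ζ²)·d² + (ε²/ζ²)·d + d + 1`. -/
theorem stmt10 {Z : Type*} (G : Set (Z → ℝ))
    (hG : ∀ g ∈ G, ∀ z, g z ∈ Set.Icc (0 : ℝ) 1)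
    (ζ ε : ℝ) (hζ : 0 < ζ) (hε : 0 < ε)
    (d : ℕ)
    (hd : ∀ (m : ℕ) (w : Fin m → Z),
      (∀ i : Fin m, ∃ g ∈ G, ζ < g (w i) ∧
        ∑ j ∈ Finset.univ.erase i, (g (w j)) ^ 2 ≤ ζ ^ 2) → m ≤ d)
    (n : ℕ) (z : Fin n → Z) :
    ((Finset.univ.filter fun j : Fin n =>
        ∃ g ∈ G, (∑ k, (g (z k)) ^ 2 ≤ ε ^ 2) ∧ ζ < g (z j)).card : ℝ)
      ≤ ε ^ 2 / ζ ^ 2 * d ^ 2 + ε ^ 2 / ζ ^ 2 * d + d + 1 :=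
  stmt10_general G ζ ε hζ d hd n z
end

section
/- Let Z be a set, G a class of functions Z → [0,1], fix ζ > 0 and a constant β > 0. Given a sequence z₁, z₂, …, z_T, for each t define the width w_t(z) = sup{ g(z) : g ∈ G, ∑_{j<t} g(z_j)² ≤ 4β² }. Let ě(G, ζ) be the eluder dimension at scale ζ: the longest sequence z⁽¹⁾,…,z⁽ᵐ⁾ such that for each i there is g⁽ⁱ⁾ ∈ G with g⁽ⁱ⁾(z⁽ⁱ⁾) > ζ and ∑_{j<i} g⁽ⁱ⁾(z⁽ʲ⁾)² ≤ ζ². Then ∑_{t=1}^T 1{ w_t(z_t) > ζ } ≤ (4β²/ζ² + 1)·ě(G, ζ). -/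
/-!
Distribute the rounds with a large width greedily into classes: round `t`, witnessed by `g_t`,
joins a class whose earlier members satisfy `∑ g_t(z_j)² < ζ²`. Such a class exists among the
first `K = ⌊4β²/ζ²⌋ + 1`, because the classes are disjoint and `∑_{j<t} g_t(z_j)² ≤ 4β² < Kζ²`.
Read in order, each class is a sequence as in the definition of the eluder dimension, so it has
at most `e` elements.
-/

open scoped Classical

open Finset

theorem exists_coloring_prefix_sum_lt {α : Type*} [LinearOrder α] {c : α → α → ℝ} {τ b : ℝ}
    {K : ℕ} (hK : b < K * τ) (S : Finset α) (hS : ∀ t ∈ S, ∑ j ∈ S with j < t, c t j ≤ b) :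
    ∃ f : α → ℕ, ∀ t ∈ S, f t < K ∧ ∑ j ∈ S with f j = f t ∧ j < t, c t j < τ := by
  induction S using Finset.induction_on_max with
  | empty => exact ⟨fun _ => 0, by simp⟩
  | insert a s ha ih =>
    have hfilter : ∀ t ∈ s, ∀ (p : α → Prop) [DecidablePred p], (∀ j, p j → j < t) →
        {j ∈ insert a s | p j} = {j ∈ s | p j} := fun t ht p _ hp => by
      rw [filter_insert, if_neg fun h => (ha t ht).not_gt (hp a h)]
    obtain ⟨f, hf⟩ := ih fun t ht => by
      simpa only [hfilter t ht (· < t) fun _ => id] using hS t (mem_insert_of_mem ht)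
    have hsa : ∑ j ∈ s, c a j ≤ b := by
      simpa [filter_insert, filter_true_of_mem ha] using hS a (mem_insert_self a s)
    obtain ⟨k, hk, hkτ⟩ : ∃ k ∈ range K, ∑ j ∈ s with f j = k, c a j < τ := by
      refine exists_lt_of_sum_lt ?_
      rw [sum_fiberwise_of_maps_to fun t ht => mem_range.2 (hf t ht).1, sum_const, card_range,
        nsmul_eq_mul]
      exact hsa.trans_lt hK
    have hupd : ∀ j ∈ s, Function.update f a k j = f j :=
      fun j hj => Function.update_of_ne (ha j hj).ne _ _
    refine ⟨Function.update f a k, fun t ht => ?_⟩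
    rcases mem_insert.1 ht with rfl | ht
    · refine ⟨by simpa using hk, ?_⟩
      convert hkτ using 2
      rw [filter_insert, if_neg (by simp), Function.update_self]
      exact filter_congr fun j hj => by simp [hupd j hj, ha j hj]
    · rw [hupd t ht,
        hfilter t ht (fun j => Function.update f a k j = f t ∧ j < t) fun _ => And.right,
        filter_congr fun j hj => by rw [hupd j hj]]
      exact hf t ht

def EluderDimLE {Z : Type*} (G : Set (Z → ℝ)) (ζ : ℝ) (e : ℕ) : Prop :=
  ∀ (m : ℕ) (w : Fin m → Z), (∀ i, ∃ g ∈ G, ζ < g (w i) ∧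
    ∑ j ∈ univ.filter (· < i), g (w j) ^ 2 ≤ ζ ^ 2) → m ≤ e

theorem map_orderEmbOfFin_filter_lt {α : Type*} [LinearOrder α] (B : Finset α) (i : Fin #B) :
    (univ.filter (· < i)).map (B.orderEmbOfFin rfl).toEmbedding
      = {t ∈ B | t < B.orderEmbOfFin rfl i} := by
  ext t
  constructor
  · simp only [mem_map, mem_filter, mem_univ, true_and]
    rintro ⟨j, hj, rfl⟩
    exact ⟨orderEmbOfFin_mem B rfl j, (B.orderEmbOfFin rfl).lt_iff_lt.2 hj⟩
  · intro ht
    obtain ⟨htB, hti⟩ := mem_filter.1 ht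
    obtain ⟨j, rfl⟩ : t ∈ Set.range (B.orderEmbOfFin rfl) := by rwa [range_orderEmbOfFin]
    simpa using hti

theorem card_le_of_forall_exists_prefix_sum_le {Z α : Type*} [LinearOrder α] {G : Set (Z → ℝ)}
    {ζ : ℝ} {e : ℕ} (he : EluderDimLE G ζ e) (z : α → Z) (B : Finset α)
    (hB : ∀ t ∈ B, ∃ g ∈ G, ζ < g (z t) ∧ ∑ j ∈ B with j < t, g (z j) ^ 2 ≤ ζ ^ 2) :
    #B ≤ e := by
  refine he _ (fun i => z (B.orderEmbOfFin rfl i)) fun i => ?_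
  obtain ⟨g, hg, hgz, hgsum⟩ := hB _ (orderEmbOfFin_mem B rfl i)
  refine ⟨g, hg, hgz, ?_⟩
  rwa [← map_orderEmbOfFin_filter_lt, sum_map] at hgsum

theorem card_le_mul_of_forall_exists_prefix_sum_le {Z α : Type*} [LinearOrder α]
    {G : Set (Z → ℝ)} {ζ b : ℝ} {e K : ℕ}
    (he : EluderDimLE G ζ e) (hK : b < K * ζ ^ 2) (z : α → Z) (S : Finset α)
    (hS : ∀ t ∈ S, ∃ g ∈ G, ζ < g (z t) ∧ ∑ j ∈ S with j < t, g (z j) ^ 2 ≤ b) :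
    #S ≤ K * e := by
  choose! g hgG hgz hgsum using hS
  obtain ⟨f, hf⟩ := exists_coloring_prefix_sum_lt (c := fun t j => g t (z j) ^ 2) hK S hgsum
  have hclass : ∀ k, #{t ∈ S | f t = k} ≤ e := fun k =>
    card_le_of_forall_exists_prefix_sum_le he z _ fun t ht => by
      obtain ⟨htS, rfl⟩ := mem_filter.1 ht
      exact ⟨g t, hgG t htS, hgz t htS, by rw [filter_filter]; exact (hf t htS).2.le⟩
  calc #S = ∑ k ∈ range K, #{t ∈ S | f t = k} :=
        card_eq_sum_card_fiberwise fun t ht => mem_range.2 (hf t ht).1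
    _ ≤ ∑ _k ∈ range K, e := sum_le_sum fun k _ => hclass k
    _ = K * e := by rw [sum_const, card_range, smul_eq_mul]

theorem stmt11_general {Z : Type*} (G : Set (Z → ℝ))
    (ζ β : ℝ) (hζ : 0 < ζ)
    (e : ℕ)
    (he : ∀ (m : ℕ) (w : Fin m → Z),
      (∀ i : Fin m, ∃ g ∈ G, ζ < g (w i) ∧
        ∑ j ∈ Finset.univ.filter (fun j : Fin m => j < i), (g (w j)) ^ 2 ≤ ζ ^ 2) → m ≤ e)
    (T : ℕ) (z : ℕ → Z) :
    ((Finset.range T).filter fun t =>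
        ∃ g ∈ G, (∑ j ∈ Finset.range t, (g (z j)) ^ 2 ≤ 4 * β ^ 2) ∧ ζ < g (z t)).card
      ≤ (4 * β ^ 2 / ζ ^ 2 + 1) * e := by
  set K := ⌊4 * β ^ 2 / ζ ^ 2⌋₊ + 1
  have hK : 4 * β ^ 2 < K * ζ ^ 2 := by
    rw [← div_lt_iff₀ (by positivity)]
    exact_mod_cast Nat.lt_floor_add_one _
  have hKle : (K : ℝ) ≤ 4 * β ^ 2 / ζ ^ 2 + 1 := by
    push_cast [K]
    gcongr
    exact Nat.floor_le (by positivity)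
  calc _ ≤ ((K * e : ℕ) : ℝ) := Nat.cast_le.2 <|
        card_le_mul_of_forall_exists_prefix_sum_le he hK z _ fun t ht => by
          obtain ⟨g, hg, hgsum, hgz⟩ := (mem_filter.1 ht).2
          refine ⟨g, hg, hgz, le_trans ?_ hgsum⟩
          exact sum_le_sum_of_subset_of_nonneg (fun j hj => by simpa using (mem_filter.1 hj).2)
            fun j _ _ => sq_nonneg _
    _ ≤ (4 * β ^ 2 / ζ ^ 2 + 1) * e := by
      push_cast
      gcongr

/-- **Eluder dimension controls the number of large widths (Lemma
`lem:eluder_indicator_bound`).** Let `G` be a class of `[0,1]`-valued functions on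
`Z`, `ζ, β > 0`, and let `e` bound the fixed-scale eluder dimension `ě(G, ζ)`
(every sequence `w⁽¹⁾,…,w⁽ᵐ⁾` admitting `g⁽ⁱ⁾ ∈ G` with `g⁽ⁱ⁾(w_i) > ζ` and
`∑_{j<i} g⁽ⁱ⁾(w_j)² ≤ ζ²` has `m ≤ e`). Then along any sequence `z₁,…,z_T`, the
number of rounds `t` at which the width
`w_t(z_t) = sup{g(z_t) : g ∈ G, ∑_{j<t} g(z_j)² ≤ 4β²}` exceeds `ζ` is at most
`(4β²/ζ² + 1)·e`. -/
theorem stmt11 {Z : Type*} (G : Set (Z → ℝ))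
    (hG : ∀ g ∈ G, ∀ z, g z ∈ Set.Icc (0 : ℝ) 1)
    (ζ β : ℝ) (hζ : 0 < ζ) (hβ : 0 < β)
    (e : ℕ)
    (he : ∀ (m : ℕ) (w : Fin m → Z),
      (∀ i : Fin m, ∃ g ∈ G, ζ < g (w i) ∧
        ∑ j ∈ Finset.univ.filter (fun j : Fin m => j < i), (g (w j)) ^ 2 ≤ ζ ^ 2) → m ≤ e)
    (T : ℕ) (z : ℕ → Z) :
    ((Finset.range T).filter fun t =>
        ∃ g ∈ G, (∑ j ∈ Finset.range t, (g (z j)) ^ 2 ≤ 4 * β ^ 2) ∧ ζ < g (z t)).card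
      ≤ (4 * β ^ 2 / ζ ^ 2 + 1) * e :=
  stmt11_general G ζ β hζ e he T z
end

section
/- Reverse-KL Fano method: Let M ≥ 2, let P⁽¹⁾,…,P⁽ᴹ⁾ be probability measures on a sample space H, and let Q be any fixed reference probability measure on H. Let P be the joint law of (m*, H) obtained by sampling m* uniformly from {1,…,M} and then H ∼ P^{(m*)}. If a measurable estimator m̂(H) satisfies P(m̂ = m*) ≥ 1 − δ, then (1/2)·log(1/δ) − log 2 ≤ (1/M)·∑_{i=1}^M KL(Q ‖ P⁽ⁱ⁾). -/
/-! For `c > 0` the inequality `a log (a / b) ≥ a (log c + 1) - c b` (a form of `log t ≤ t - 1`),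
combined with Gibbs' inequality for the restrictions of `Q` and `P` to a measurable set `s`,
gives `∫_s log (dQ/dP) dQ ≥ Q(s) (log c + 1) - c P(s)`. Applying this to `{m̂ = i}` and its
complement yields a lower bound on `KL(Q ‖ P⁽ⁱ⁾)` that is affine in `(Q(m̂ = i), P⁽ⁱ⁾(m̂ = i))`,
so averaging over `i` turns it into the same bound at `(1/M, b)`, where `b ≥ 1 - δ` is the
success probability. With `c₁ = 1/M` and `c₂ = (1 - 1/M) / min δ 1` this is at least
`-h(1/M) + (1/2) log (1/δ)`, and the binary entropy `h` is at most `log 2`. -/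

open MeasureTheory InformationTheory Real

lemma Real.mul_log_add_one_sub_mul_le_mul_log_div {a b c : ℝ} (ha : 0 ≤ a) (hb : 0 ≤ b)
    (hab : b = 0 → a = 0) (hc : 0 < c) :
    a * (log c + 1) - c * b ≤ a * log (a / b) := by
  rcases ha.eq_or_lt with rfl | ha
  · simpa using mul_nonneg hc.le hb
  have hb : 0 < b := hb.lt_of_ne fun h => ha.ne' (hab h.symm)
  have key := one_sub_inv_le_log_of_pos (show 0 < a / (b * c) by positivity)
  rw [log_div ha.ne' (by positivity), log_mul hb.ne' hc.ne', inv_div] at key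
  rw [log_div ha.ne' hb.ne']
  have h := mul_le_mul_of_nonneg_left key ha.le
  rw [mul_sub, mul_one, mul_div_cancel₀ _ ha.ne'] at h
  linarith

/-- For `a, b ∈ [0, 1]`, the supremum over `c₁, c₂ > 0` is the binary divergence
`a log (a / b) + (1 - a) log ((1 - a) / (1 - b))`. -/
noncomputable def binaryKlBound (c₁ c₂ a b : ℝ) : ℝ :=
  a * (log c₁ + 1) - c₁ * b + ((1 - a) * (log c₂ + 1) - c₂ * (1 - b))

lemma average_binaryKlBound {ι : Type*} [Fintype ι] {a b : ι → ℝ} (ha : ∑ i, a i = 1)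
    (c₁ c₂ : ℝ) :
    1 / (Fintype.card ι : ℝ) * ∑ i, binaryKlBound c₁ c₂ (a i) (b i) =
      binaryKlBound c₁ c₂ (1 / Fintype.card ι) (1 / Fintype.card ι * ∑ i, b i) := by
  have hcard : (Fintype.card ι : ℝ) ≠ 0 := by
    rintro h
    simp [Fintype.card_eq_zero_iff.1 (by exact_mod_cast h)] at ha
  simp only [binaryKlBound, Finset.sum_add_distrib, Finset.sum_sub_distrib, ← Finset.sum_mul,
    ← Finset.mul_sum, ha, Finset.sum_const, Finset.card_univ, nsmul_eq_mul]
  field_simp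

lemma exists_binaryKlBound_ge {x b δ : ℝ} (hx₀ : 0 < x) (hx : x ≤ 1 / 2) (hb₀ : 0 ≤ b)
    (hb₁ : b ≤ 1) (hδ : 0 < δ) (hδb : 1 - δ ≤ b) :
    ∃ c₁ c₂, 0 < c₁ ∧ 0 < c₂ ∧ 1 / 2 * log (1 / δ) - log 2 ≤ binaryKlBound c₁ c₂ x b := by
  set m := min δ 1
  have hm₀ : 0 < m := lt_min hδ one_pos
  have hmb : 1 - b ≤ m := le_min (by linarith) (by linarith)
  have hx₁ : 0 < 1 - x := by linarith
  refine ⟨x, (1 - x) / m, hx₀, by positivity, ?_⟩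
  have hlog_m : 0 ≤ log (1 / m) := log_nonneg (one_le_one_div hm₀ (min_le_right δ 1))
  have hlog_δ : log (1 / δ) ≤ log (1 / m) :=
    log_le_log (by positivity) (one_div_le_one_div_of_le hm₀ (min_le_left δ 1))
  have hentropy : -log 2 ≤ x * log x + (1 - x) * log (1 - x) := by
    have := binEntropy_le_log_two (p := x)
    rw [binEntropy, log_inv, log_inv] at this
    linarith
  have hslack : (1 - x) / m * (1 - b) ≤ 1 - x := by
    rw [div_mul_eq_mul_div, div_le_iff₀ hm₀]
    exact mul_le_mul_of_nonneg_left hmb hx₁.le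
  calc 1 / 2 * log (1 / δ) - log 2
      ≤ x * log x + (1 - x) * log (1 - x) + (1 - x) * log (1 / m) := by nlinarith
    _ = x * log x + (1 - x) * log ((1 - x) / m) := by
      rw [div_eq_mul_one_div (1 - x), log_mul hx₁.ne' (by positivity)]
      ring
    _ ≤ binaryKlBound x ((1 - x) / m) x b := by
      rw [binaryKlBound]
      nlinarith [mul_nonneg hx₀.le (sub_nonneg.2 hb₁)]

namespace MeasureTheory

variable {α : Type*} {mα : MeasurableSpace α} {μ ν : Measure α} {s : Set α}

lemma Measure.rnDeriv_restrict_restrict [μ.HaveLebesgueDecomposition ν] [SigmaFinite ν]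
    (hμν : μ ≪ ν) (hs : MeasurableSet s) :
    (μ.restrict s).rnDeriv (ν.restrict s) =ᵐ[ν.restrict s] μ.rnDeriv ν := by
  conv_lhs => rw [← Measure.withDensity_rnDeriv_eq μ ν hμν, restrict_withDensity hs]
  exact Measure.rnDeriv_withDensity _ (Measure.measurable_rnDeriv μ ν)

section Finite

variable [IsFiniteMeasure μ] [IsFiniteMeasure ν]

lemma mul_log_le_setIntegral_llr (hμν : μ ≪ ν) (h_int : Integrable (llr μ ν) μ)
    (hs : MeasurableSet s) :
    μ.real s * log (μ.real s / ν.real s) ≤ ∫ x in s, llr μ ν x ∂μ := by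
  have hμν' : μ.restrict s ≪ ν.restrict s := hμν.restrict s
  have hllr : llr (μ.restrict s) (ν.restrict s) =ᵐ[μ.restrict s] llr μ ν :=
    Filter.EventuallyEq.fun_comp (hμν'.ae_le (Measure.rnDeriv_restrict_restrict hμν hs))
      fun x => log x.toReal
  have h_int' := h_int.restrict.congr hllr.symm
  have h := mul_log_le_toReal_klDiv hμν' h_int'
  rw [toReal_klDiv hμν' h_int', integral_congr_ae hllr] at h
  simpa [measureReal_restrict_apply_univ] using h

lemma mul_log_add_one_sub_mul_le_setIntegral_llr (hμν : μ ≪ ν)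
    (h_int : Integrable (llr μ ν) μ) (hs : MeasurableSet s) {c : ℝ} (hc : 0 < c) :
    μ.real s * (log c + 1) - c * ν.real s ≤ ∫ x in s, llr μ ν x ∂μ :=
  (mul_log_add_one_sub_mul_le_mul_log_div measureReal_nonneg measureReal_nonneg
    (fun h => (measureReal_eq_zero_iff).2 (hμν ((measureReal_eq_zero_iff).1 h))) hc).trans
    (mul_log_le_setIntegral_llr hμν h_int hs)

end Finite

lemma binaryKlBound_le_integral_llr [IsProbabilityMeasure μ] [IsProbabilityMeasure ν]
    (hμν : μ ≪ ν) (h_int : Integrable (llr μ ν) μ) (hs : MeasurableSet s) {c₁ c₂ : ℝ}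
    (hc₁ : 0 < c₁) (hc₂ : 0 < c₂) :
    binaryKlBound c₁ c₂ (μ.real s) (ν.real s) ≤ ∫ x, llr μ ν x ∂μ := by
  rw [binaryKlBound, ← integral_add_compl hs h_int, ← probReal_compl_eq_one_sub hs,
    ← probReal_compl_eq_one_sub hs]
  exact add_le_add (mul_log_add_one_sub_mul_le_setIntegral_llr hμν h_int hs hc₁)
    (mul_log_add_one_sub_mul_le_setIntegral_llr hμν h_int hs.compl hc₂)

end MeasureTheory

/-- **Fano method with reverse KL divergence (Lemma `lem:fano`).** Let `M ≥ 2`,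
`P⁽¹⁾,…,P⁽ᴹ⁾` probability measures on `H`, and `Q` a reference probability
measure with `Q ≪ P⁽ⁱ⁾` and finite divergences `KL(Q ‖ P⁽ⁱ⁾) = ∫ log(dQ/dP⁽ⁱ⁾) dQ`.
If an estimator `m̂` identifies the index drawn uniformly at random with probability
at least `1 − δ` (i.e. `M⁻¹ ∑_i P⁽ⁱ⁾(m̂ = i) ≥ 1 − δ`), then
`(1/2) log(1/δ) − log 2 ≤ M⁻¹ ∑_i KL(Q ‖ P⁽ⁱ⁾)`. -/
theorem stmt14 {H : Type*} [MeasurableSpace H] (M : ℕ) (hM : 2 ≤ M)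
    (P : Fin M → Measure H) [∀ i, IsProbabilityMeasure (P i)]
    (Q : Measure H) [IsProbabilityMeasure Q]
    (hac : ∀ i, Q ≪ P i)
    (hint : ∀ i, Integrable (fun h => Real.log (Q.rnDeriv (P i) h).toReal) Q)
    (mhat : H → Fin M) (hmeas : Measurable mhat)
    (δ : ℝ) (hδ : 0 < δ)
    (hcorrect : 1 - δ ≤ (1 / (M : ℝ)) * ∑ i, ((P i) {h | mhat h = i}).toReal) :
    (1 / 2) * Real.log (1 / δ) - Real.log 2 ≤
      (1 / (M : ℝ)) * ∑ i, ∫ h, Real.log (Q.rnDeriv (P i) h).toReal ∂Q := by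
  set A : Fin M → Set H := fun i => mhat ⁻¹' {i}
  have hA : ∀ i, MeasurableSet (A i) := fun i => hmeas (measurableSet_singleton i)
  have hpartition : ∑ i, Q.real (A i) = 1 := by
    rw [sum_measureReal_preimage_singleton _ fun i _ => hA i]
    simp
  have hM' : (2 : ℝ) ≤ M := by exact_mod_cast hM
  have hb₀ : 0 ≤ 1 / (M : ℝ) * ∑ i, (P i).real (A i) := by positivity
  have hb₁ : 1 / (M : ℝ) * ∑ i, (P i).real (A i) ≤ 1 := by
    calc 1 / (M : ℝ) * ∑ i, (P i).real (A i) ≤ 1 / (M : ℝ) * ∑ _i : Fin M, 1 := by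
          gcongr; exact measureReal_le_one
      _ = 1 := by
        simp only [Finset.sum_const, Finset.card_univ, Fintype.card_fin, nsmul_eq_mul, mul_one]
        field_simp
  obtain ⟨c₁, c₂, hc₁, hc₂, hfano⟩ := exists_binaryKlBound_ge (x := 1 / (M : ℝ))
    (by positivity) (by rw [div_le_div_iff₀] <;> linarith) hb₀ hb₁ hδ hcorrect
  calc 1 / 2 * log (1 / δ) - log 2 ≤ _ := hfano
    _ = 1 / (M : ℝ) * ∑ i, binaryKlBound c₁ c₂ (Q.real (A i)) ((P i).real (A i)) := by
      simpa using (average_binaryKlBound hpartition c₁ c₂).symm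
    _ ≤ _ := by
      gcongr with i
      exact binaryKlBound_le_integral_llr (hac i) (hint i) (hA i) hc₁ hc₂
end

section
/- Let π(a|x) ∈ Δ(A) be the inverse-gap-weighted distribution over a finite set A' ⊆ A defined, for a predictor f̂ with â = argmax_{a∈A'} f̂(x,a) and learning rate γ > 0, by p(a) = 1/(|A'| + γ·(f̂(x,â) − f̂(x,a))) for a ∈ A' \ {â}, p(â) = 1 − ∑_{a ∈ A'\{â}} p(a), and p(a) = 0 for a ∉ A'. Then: (i) p is a valid probability distribution, i.e. p(a) ≥ 0 for all a and in particular p(â) ≥ 1/|A'|; and (ii) ∑_{a∈A'} p(a)·(f̂(x,â) − f̂(x,a)) ≤ (|A'| − 1)/γ. -/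
/-!
Every suboptimal action `a` has gap `Δ = f̂(x,â) − f̂(x,a) ≥ 0` and receives mass
`1/(|A'| + γΔ) ≤ 1/|A'|`, so the `|A'| − 1` suboptimal actions take at most
`1 − 1/|A'|` in total, leaving at least `1/|A'|` for `â`. Each suboptimal action contributes
`Δ/(|A'| + γΔ) < 1/γ` to the estimated regret, and `â` contributes nothing.
-/

open Finset

lemma one_div_add_mul_le_one_div {n γ d : ℝ} (hn : 0 < n) (hγ : 0 ≤ γ) (hd : 0 ≤ d) :
    1 / (n + γ * d) ≤ 1 / n :=
  one_div_le_one_div_of_le hn (le_add_of_nonneg_right (mul_nonneg hγ hd))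

lemma one_div_add_mul_mul_le_one_div {n γ d : ℝ} (hn : 0 < n) (hγ : 0 < γ) (hd : 0 ≤ d) :
    1 / (n + γ * d) * d ≤ 1 / γ := by
  rw [div_mul_eq_mul_div, one_mul, div_le_div_iff₀ (by positivity) hγ]
  nlinarith

lemma Finset.sum_erase_le_card_sub_one_mul {A : Type*} [DecidableEq A] {s : Finset A} {a₀ : A}
    (ha₀ : a₀ ∈ s) {g : A → ℝ} {c : ℝ} (hg : ∀ b ∈ s.erase a₀, g b ≤ c) :
    ∑ b ∈ s.erase a₀, g b ≤ (#s - 1) * c :=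
  (sum_le_card_nsmul _ _ _ hg).trans_eq (by rw [nsmul_eq_mul, cast_card_erase_of_mem ha₀])

section InverseGapWeighting

variable {A : Type*} (s : Finset A) (a₀ : A) (γ : ℝ) (f : A → ℝ)

noncomputable def igwWeight (a : A) : ℝ :=
  1 / ((#s : ℝ) + γ * (f a₀ - f a))

variable {s a₀ γ f}

lemma igwWeight_pos (hγ : 0 ≤ γ) {a : A} (ha : a ∈ s) (hfa : f a ≤ f a₀) :
    0 < igwWeight s a₀ γ f a := by
  have : 0 < (#s : ℝ) := by exact_mod_cast card_pos.mpr ⟨a, ha⟩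
  have := mul_nonneg hγ (sub_nonneg.mpr hfa)
  unfold igwWeight
  positivity

variable [DecidableEq A]

variable (s a₀ γ f) in
noncomputable def igw (a : A) : ℝ :=
  if a ∈ s then
    (if a = a₀ then 1 - ∑ b ∈ s.erase a₀, igwWeight s a₀ γ f b else igwWeight s a₀ γ f a)
  else 0

lemma igw_of_notMem {a : A} (ha : a ∉ s) : igw s a₀ γ f a = 0 := by
  simp [igw, ha]

lemma igw_self (ha₀ : a₀ ∈ s) :
    igw s a₀ γ f a₀ = 1 - ∑ b ∈ s.erase a₀, igwWeight s a₀ γ f b := by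
  simp [igw, ha₀]

lemma igw_of_mem_erase {a : A} (ha : a ∈ s.erase a₀) :
    igw s a₀ γ f a = igwWeight s a₀ γ f a := by
  simp [igw, mem_of_mem_erase ha, ne_of_mem_erase ha]

lemma sum_igw [Fintype A] (ha₀ : a₀ ∈ s) :
    ∑ a, igw s a₀ γ f a = 1 := by
  rw [← sum_subset s.subset_univ fun a _ ha ↦ igw_of_notMem ha, ← add_sum_erase _ _ ha₀,
    igw_self ha₀, sum_congr rfl fun a ha ↦ igw_of_mem_erase ha, sub_add_cancel]

variable (hγ : 0 < γ) (hmax : ∀ a ∈ s, f a ≤ f a₀)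
include hγ hmax

lemma one_div_card_le_igw_self (ha₀ : a₀ ∈ s) : 1 / (#s : ℝ) ≤ igw s a₀ γ f a₀ := by
  have hn : 0 < (#s : ℝ) := by exact_mod_cast card_pos.mpr ⟨a₀, ha₀⟩
  have hsum : ∑ b ∈ s.erase a₀, igwWeight s a₀ γ f b ≤ (#s - 1) * (1 / #s) :=
    sum_erase_le_card_sub_one_mul ha₀ fun b hb ↦
      one_div_add_mul_le_one_div hn hγ.le (sub_nonneg.mpr (hmax b (mem_of_mem_erase hb)))
  rw [sub_one_mul, mul_one_div_cancel hn.ne'] at hsum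
  rw [igw_self ha₀]
  linarith

lemma igw_nonneg (ha₀ : a₀ ∈ s) (a : A) : 0 ≤ igw s a₀ γ f a := by
  by_cases has : a ∈ s
  · by_cases haa₀ : a = a₀
    · subst haa₀
      exact (by positivity : (0 : ℝ) ≤ 1 / #s).trans (one_div_card_le_igw_self hγ hmax has)
    · rw [igw_of_mem_erase (mem_erase.mpr ⟨haa₀, has⟩)]
      exact (igwWeight_pos hγ.le has (hmax a has)).le
  · rw [igw_of_notMem has]

lemma sum_igw_mul_gap_le (ha₀ : a₀ ∈ s) :
    ∑ a ∈ s, igw s a₀ γ f a * (f a₀ - f a) ≤ (#s - 1) / γ := by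
  have hn : 0 < (#s : ℝ) := by exact_mod_cast card_pos.mpr ⟨a₀, ha₀⟩
  rw [← add_sum_erase _ _ ha₀, sub_self, mul_zero, zero_add, div_eq_mul_one_div]
  refine sum_erase_le_card_sub_one_mul ha₀ fun b hb ↦ ?_
  rw [igw_of_mem_erase hb]
  exact one_div_add_mul_mul_le_one_div hn hγ (sub_nonneg.mpr (hmax b (mem_of_mem_erase hb)))

end InverseGapWeighting

theorem stmt15_general {X A : Type*} [Fintype A] [DecidableEq A]
    (fhat : X → A → ℝ) (x : X) (A' : Finset A)
    (γ : ℝ) (hγ : 0 < γ) (ahat : A) (hahat : ahat ∈ A')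
    (hmax : ∀ a ∈ A', fhat x a ≤ fhat x ahat)
    (p : A → ℝ)
    (hp : ∀ a, p a = if a ∈ A' then
        (if a = ahat then
          1 - ∑ b ∈ A'.erase ahat, 1 / ((A'.card : ℝ) + γ * (fhat x ahat - fhat x b))
        else 1 / ((A'.card : ℝ) + γ * (fhat x ahat - fhat x a)))
      else 0) :
    (∀ a, 0 ≤ p a) ∧ (1 / (A'.card : ℝ) ≤ p ahat) ∧ (∑ a, p a = 1) ∧
      ∑ a ∈ A', p a * (fhat x ahat - fhat x a) ≤ ((A'.card : ℝ) - 1) / γ := by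
  obtain rfl : p = igw A' ahat γ (fhat x) := funext hp
  exact ⟨igw_nonneg hγ hmax hahat, one_div_card_le_igw_self hγ hmax hahat, sum_igw hahat,
    sum_igw_mul_gap_le hγ hmax hahat⟩

/-- **The inverse gap weighting distribution is valid and has small estimated
regret.** Given a finite action subset `A' ∋ â` where `â` maximizes `f̂(x,·)` over
`A'`, and a learning rate `γ > 0`, the inverse-gap-weighted distribution
`p(a) = 1/(|A'| + γ(f̂(x,â) − f̂(x,a)))` for `a ∈ A' \ {â}`,
`p(â) = 1 − ∑_{a ∈ A'\{â}} p(a)`, `p(a) = 0` for `a ∉ A'`, satisfies: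
(i) `p` is a probability distribution with `p(a) ≥ 0` for all `a`, and in
particular `p(â) ≥ 1/|A'|`; and
(ii) `∑_{a ∈ A'} p(a)·(f̂(x,â) − f̂(x,a)) ≤ (|A'| − 1)/γ`. -/
theorem stmt15 {X A : Type*} [Fintype A] [DecidableEq A]
    (fhat : X → A → ℝ) (x : X) (A' : Finset A) (hA' : A'.Nonempty)
    (γ : ℝ) (hγ : 0 < γ) (ahat : A) (hahat : ahat ∈ A')
    (hmax : ∀ a ∈ A', fhat x a ≤ fhat x ahat)
    (p : A → ℝ)
    (hp : ∀ a, p a = if a ∈ A' then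
        (if a = ahat then
          1 - ∑ b ∈ A'.erase ahat, 1 / ((A'.card : ℝ) + γ * (fhat x ahat - fhat x b))
        else 1 / ((A'.card : ℝ) + γ * (fhat x ahat - fhat x a)))
      else 0) :
    (∀ a, 0 ≤ p a) ∧ (1 / (A'.card : ℝ) ≤ p ahat) ∧ (∑ a, p a = 1) ∧
      ∑ a ∈ A', p a * (fhat x ahat - fhat x a) ≤ ((A'.card : ℝ) - 1) / γ :=
  stmt15_general fhat x A' γ hγ ahat hahat hmax p hp
end

section
/- In a block MDP with optimistic Q-function Q̄ satisfying Q̄_h(x,a) ≥ Q*_h(x,a) for all h, x, a, and greedy policy π(x) = argmax_a Q̄_h(x,a), if at a fixed layer h and latent state s the per-state gap satisfies Δ(x,a) ≥ Δ(s) whenever Δ(x,a) > 0 for x in the support of ψ(s), then E_{x∼ψ(s)}[ Ē_h(x, π(x))² / Δ(x, π(x)) ] ≤ (A/Δ(s)) · E_{x∼ψ(s)} E_{a∼unif(A)}[ Ē_h(x,a)² ], where Ē_h(x,a) ≥ 0 is the Bellman surplus and A = |A| is the number of actions. -/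
/-!
The inequality holds pointwise in `x`. Where the gap of the greedy action is positive it is
at least `Δ(s)`, so dividing by `Δ(s)` instead only increases the term; a single squared surplus
is at most the sum over all actions, which is `A` times the uniform average.
-/

open MeasureTheory

section

variable {A : Type*} [Fintype A]

lemma sq_le_card_mul_uniform_avg (e : A → ℝ) (a₀ : A) :
    e a₀ ^ 2 ≤ Fintype.card A * ((1 / Fintype.card A) * ∑ a, e a ^ 2) := by
  have : Nonempty A := ⟨a₀⟩
  rw [← mul_assoc, mul_one_div_cancel (by positivity), one_mul]
  exact Finset.single_le_sum (fun a _ => sq_nonneg (e a)) (Finset.mem_univ a₀)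

/-- At `d = 0` the left side is the junk value `a / 0 = 0`. -/
lemma div_le_div_of_pos_imp_le {a d δ : ℝ} (ha : 0 ≤ a) (hδ : 0 < δ) (hd : 0 ≤ d)
    (hgap : 0 < d → δ ≤ d) : a / d ≤ a / δ := by
  rcases hd.eq_or_lt with rfl | hd
  · rw [div_zero]
    positivity
  · exact div_le_div_of_nonneg_left ha hδ (hgap hd)

lemma sq_div_gap_le_card_div_mul_uniform_avg (Q e : A → ℝ) {V δ : ℝ} (a₀ : A)
    (hV : ∀ a, Q a ≤ V) (hδ : 0 < δ) (hgap : ∀ a, 0 < V - Q a → δ ≤ V - Q a) :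
    e a₀ ^ 2 / (V - Q a₀) ≤
      (Fintype.card A / δ) * ((1 / Fintype.card A) * ∑ a, e a ^ 2) :=
  calc e a₀ ^ 2 / (V - Q a₀)
      ≤ e a₀ ^ 2 / δ :=
        div_le_div_of_pos_imp_le (sq_nonneg _) hδ (sub_nonneg.2 (hV a₀)) (hgap a₀)
    _ ≤ Fintype.card A * ((1 / Fintype.card A) * ∑ a, e a ^ 2) / δ := by
        gcongr
        exact sq_le_card_mul_uniform_avg e a₀
    _ = _ := by ring

end

theorem stmt19_general {X A : Type*} [MeasurableSpace X] [Fintype A]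
    (ψ : Measure X)
    (Qstar Ebar : X → A → ℝ) (Vstar : X → ℝ) (π : X → A)
    (hV : ∀ x, IsGreatest (Set.range fun a => Qstar x a) (Vstar x))
    (Δs : ℝ) (hΔs : 0 < Δs)
    (hgap : ∀ᵐ x ∂ψ, ∀ a, 0 < Vstar x - Qstar x a → Δs ≤ Vstar x - Qstar x a)
    (hint1 : Integrable (fun x => (Ebar x (π x)) ^ 2 / (Vstar x - Qstar x (π x))) ψ)
    (hint2 : Integrable (fun x => (1 / (Fintype.card A : ℝ)) * ∑ a, (Ebar x a) ^ 2) ψ) :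
    (∫ x, (Ebar x (π x)) ^ 2 / (Vstar x - Qstar x (π x)) ∂ψ) ≤
      ((Fintype.card A : ℝ) / Δs) *
        ∫ x, (1 / (Fintype.card A : ℝ)) * ∑ a, (Ebar x a) ^ 2 ∂ψ := by
  rw [← integral_const_mul]
  refine integral_mono_ae hint1 (hint2.const_mul _) ?_
  filter_upwards [hgap] with x hgap_x
  exact sq_div_gap_le_card_div_mul_uniform_avg (Qstar x) (Ebar x) (π x)
    (fun a => (hV x).2 ⟨a, rfl⟩) hΔs hgap_x

/-- **Per-state surplus bound in a block MDP.** Fix a layer `h` and latent state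
`s` with emission distribution `ψ = ψ(s)`. Let `Q̄` be optimistic (`Q̄ ≥ Q*`) with
greedy policy `π`, `V*(x) = max_a Q*(x,a)`, and let the Bellman surplus
`Ē(x,a) = Q̄(x,a) − (f*(x,a) + [P* V̄](x,a))` be nonnegative. If the gaps
`Δ(x,a) = V*(x) − Q*(x,a)` satisfy `Δ(x,a) ≥ Δ(s)` whenever `Δ(x,a) > 0`
(`ψ`-a.e. over the support of `ψ(s)`), then
`E_{x∼ψ}[Ē(x,π(x))² / Δ(x,π(x))] ≤ (A/Δ(s)) · E_{x∼ψ} E_{a∼unif(A)}[Ē(x,a)²]`,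
where `A = |A|` is the number of actions. -/
theorem stmt19 {X A : Type*} [MeasurableSpace X] [Fintype A] [Nonempty A]
    (ψ : Measure X) [IsProbabilityMeasure ψ]
    (Qbar Qstar Ebar fstar PV : X → A → ℝ) (Vstar : X → ℝ) (π : X → A)
    (hV : ∀ x, IsGreatest (Set.range fun a => Qstar x a) (Vstar x))
    (hopt : ∀ x a, Qstar x a ≤ Qbar x a)
    (hgreedy : ∀ x a, Qbar x a ≤ Qbar x (π x))
    (hE : ∀ x a, Ebar x a = Qbar x a - (fstar x a + PV x a))
    (hEpos : ∀ x a, 0 ≤ Ebar x a)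
    (Δs : ℝ) (hΔs : 0 < Δs)
    (hgap : ∀ᵐ x ∂ψ, ∀ a, 0 < Vstar x - Qstar x a → Δs ≤ Vstar x - Qstar x a)
    (hint1 : Integrable (fun x => (Ebar x (π x)) ^ 2 / (Vstar x - Qstar x (π x))) ψ)
    (hint2 : Integrable (fun x => (1 / (Fintype.card A : ℝ)) * ∑ a, (Ebar x a) ^ 2) ψ) :
    (∫ x, (Ebar x (π x)) ^ 2 / (Vstar x - Qstar x (π x)) ∂ψ) ≤
      ((Fintype.card A : ℝ) / Δs) *
        ∫ x, (1 / (Fintype.card A : ℝ)) * ∑ a, (Ebar x a) ^ 2 ∂ψ :=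
  stmt19_general ψ Qstar Ebar Vstar π hV Δs hΔs hgap hint1 hint2
end
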